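/- Let w = w_1 w_2 … w_k be a word over the alphabet {R, D}. Then the number of 01-fillings of the Ferrers shape associated with w equals the number of sequences (λ^0, λ^1, …, λ^k) of partitions with λ^0 = λ^k = ∅ such that for each 1 ≤ i ≤ k: if w_i = R then λ^i is obtained from λ^{i-1} by adding a (possibly empty) horizontal strip, and if w_i = D then λ^i is obtained from λ^{i-1} by deleting a (possibly empty) vertical strip. -/

import Mathlib

/-- A partition: a weakly decreasing, eventually-zero sequence of nonnegative integers
(`parts i` is the `(i+1)`-st part `λ_{i+1}`). -/
structure Partn where
  parts : ℕ → ℕ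
  antitone : ∀ i j, i ≤ j → parts j ≤ parts i
  eventually_zero : ∃ N, ∀ i, N ≤ i → parts i = 0

/-- The empty partition `∅`. -/
def Partn.empty : Partn :=
  ⟨fun _ => 0, fun _ _ _ => le_rfl, ⟨0, fun _ _ => rfl⟩⟩

/-- `lam` is obtained from `μ` by adding a square (equivalently, `μ` is obtained from
`lam` by deleting a square): one part grows by 1 and all other parts agree. -/
def AddSqP (μ lam : Partn) : Prop :=
  ∃ j, lam.parts j = μ.parts j + 1 ∧ ∀ i, i ≠ j → lam.parts i = μ.parts i

/-- `lam` is obtained from `μ` by adding a (possibly empty) horizontal strip: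
`μ_i ≤ λ_i` and `λ_{i+1} ≤ μ_i` for all `i`. -/
def HStrip (μ lam : Partn) : Prop :=
  ∀ j, μ.parts j ≤ lam.parts j ∧ lam.parts (j + 1) ≤ μ.parts j

/-- `lam` is obtained from `μ` by deleting a (possibly empty) vertical strip:
`λ_i ≤ μ_i ≤ λ_i + 1` for all `i`. -/
def VStripDel (μ lam : Partn) : Prop :=
  ∀ j, lam.parts j ≤ μ.parts j ∧ μ.parts j ≤ lam.parts j + 1

/-!
Krattenthaler's argument: swapping an adjacent factor `RD` of the word into `DR` removes exactly
one cell from the Ferrers shape, and halves the number of strip sequences.  The latter is a local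
statement about the partition `ρ` sitting between two fixed neighbours `μ` and `ν`: for each
part, the admissible values of `ρ_j` form an interval, and the interval lengths for `RD` and
for `DR` differ by a factor that telescopes to `2`.  Once no `RD` factor is left the shape is
empty and the only strip sequence is the constant `∅`.
-/

open Finset

theorem Finset.prod_range_mul_telescope {M : Type*} [CommMonoid M] {e d T : ℕ → M}
    (h : ∀ j, e j * T (j + 1) = d j * T j) (n : ℕ) :
    (∏ j ∈ range n, e j) * T n = (∏ j ∈ range n, d j) * T 0 := by
  induction n with
  | zero => simp
  | succ n ih =>
    rw [prod_range_succ, prod_range_succ, mul_assoc, h, ← mul_assoc, mul_right_comm, ih,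
      mul_right_comm]

namespace Partn

theorem ext {p q : Partn} (h : p.parts = q.parts) : p = q := by
  cases p; cases q; cases h; rfl

theorem eq_empty_of_hStrip_empty {μ : Partn} (h : HStrip μ Partn.empty) : μ = Partn.empty :=
  Partn.ext <| funext fun j => Nat.le_zero.1 (h j).1

theorem eq_empty_of_vStripDel_empty {lam : Partn} (h : VStripDel Partn.empty lam) :
    lam = Partn.empty :=
  Partn.ext <| funext fun j => Nat.le_zero.1 (h j).1

theorem exists_parts_eq_zero (μ ν : Partn) :
    ∃ M, ∀ j, M ≤ j → μ.parts j = 0 ∧ ν.parts j = 0 := by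
  obtain ⟨M₁, h₁⟩ := μ.eventually_zero
  obtain ⟨M₂, h₂⟩ := ν.eventually_zero
  exact ⟨max M₁ M₂, fun j hj => ⟨h₁ j (le_of_max_le_left hj), h₂ j (le_of_max_le_right hj)⟩⟩

def box (lo hi : ℕ → ℕ) : Set Partn := {ρ | ∀ j, ρ.parts j ∈ Set.Icc (lo j) (hi j)}

section Box

variable {lo hi : ℕ → ℕ} (N : ℕ)

/-- Since `hi (j + 1) ≤ lo j`, any choice of the parts in their intervals is weakly decreasing. -/
def boxEquivPi (hstep : ∀ j, hi (j + 1) ≤ lo j)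
    (hzero : ∀ j, N ≤ j → lo j = 0 ∧ hi j = 0) :
    box lo hi ≃ ((j : Fin N) → Set.Icc (lo j) (hi j)) where
  toFun ρ j := ⟨ρ.1.parts j, ρ.2 j⟩
  invFun g :=
    have hanti : Antitone fun j => if h : j < N then (g ⟨j, h⟩ : ℕ) else 0 :=
      antitone_nat_of_succ_le fun j => by
        by_cases h : j + 1 < N
        · rw [dif_pos h, dif_pos (by omega)]
          exact (g ⟨j + 1, h⟩).2.2.trans ((hstep j).trans (g ⟨j, by omega⟩).2.1)
        · rw [dif_neg h]
          exact Nat.zero_le _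
    ⟨⟨_, fun _ _ hij => hanti hij, ⟨N, fun j hj => dif_neg (by omega)⟩⟩,
    fun j => by
      by_cases h : j < N
      · simp only [dif_pos h]
        exact (g ⟨j, h⟩).2
      · simp [dif_neg h, (hzero j (by omega)).1]⟩
  left_inv ρ := by
    refine Subtype.ext (Partn.ext (funext fun j => ?_))
    by_cases h : j < N
    · simp [dif_pos h]
    · have := (ρ.2 j).2
      simp only [dif_neg h]
      rw [(hzero j (by omega)).2] at this
      omega
  right_inv g := funext fun j => Subtype.ext (dif_pos j.2)

theorem finite_box (hstep : ∀ j, hi (j + 1) ≤ lo j)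
    (hzero : ∀ j, N ≤ j → lo j = 0 ∧ hi j = 0) :
    Finite (box lo hi) :=
  Finite.of_equiv _ (boxEquivPi N hstep hzero).symm

theorem card_box (hstep : ∀ j, hi (j + 1) ≤ lo j)
    (hzero : ∀ j, N ≤ j → lo j = 0 ∧ hi j = 0) :
    Nat.card (box lo hi) = ∏ j ∈ range N, (hi j + 1 - lo j) := by
  rw [Nat.card_congr (boxEquivPi N hstep hzero), Nat.card_pi, ← Fin.prod_univ_eq_prod_range]
  simp

end Box

def Step (b : Bool) (μ lam : Partn) : Prop := if b then HStrip μ lam else VStripDel μ lam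

theorem step_empty_empty (b : Bool) : Step b Partn.empty Partn.empty := by
  cases b
  · exact fun _ => ⟨le_rfl, Nat.le_succ _⟩
  · exact fun _ => ⟨le_rfl, le_rfl⟩

def between (b c : Bool) (μ ν : Partn) : Set Partn := {ρ | Step b μ ρ ∧ Step c ρ ν}

/-- The necessary condition, common to the words `RD` and `DR`, for anything to fit between
`μ` and `ν`. -/
def Interlaced (μ ν : Partn) : Prop :=
  ∀ j, ν.parts (j + 1) ≤ μ.parts j ∧ μ.parts j ≤ ν.parts j + 1

section Local

variable (μ ν : Partn)

def lowerDR (j : ℕ) : ℕ := max (μ.parts j - 1) (ν.parts (j + 1))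

def upperDR (j : ℕ) : ℕ := min (μ.parts j) (ν.parts j)

def lowerRD (j : ℕ) : ℕ := max (μ.parts j) (ν.parts j)

def upperRD : ℕ → ℕ
  | 0 => ν.parts 0 + 1
  | j + 1 => min (ν.parts (j + 1) + 1) (μ.parts j)

theorem between_false_true_eq_box : between false true μ ν = box (lowerDR μ ν) (upperDR μ ν) := by
  ext ρ
  simp only [between, Step, box, lowerDR, upperDR, Set.mem_Icc]
  refine ⟨fun ⟨hd, hr⟩ j => ?_, fun h => ⟨fun j => ?_, fun j => ?_⟩⟩
  · have := hd j; have := hr j; omega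
  · have := h j; omega
  · have := h j; have := h (j + 1); omega

theorem between_true_false_eq_box : between true false μ ν = box (lowerRD μ ν) (upperRD μ ν) := by
  ext ρ
  simp only [between, Step, box, lowerRD, Set.mem_Icc]
  refine ⟨fun ⟨hr, hd⟩ j => ?_, fun h => ⟨fun j => ?_, fun j => ?_⟩⟩
  · cases j with
    | zero => have := hr 0; have := hd 0; simp only [upperRD]; omega
    | succ j => have := hr j; have := hr (j + 1); have := hd (j + 1); simp only [upperRD]; omega
  · have := h j; have := h (j + 1); simp only [upperRD] at *; omega
  · cases j with
    | zero => have := h 0; simp only [upperRD] at *; omega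
    | succ j => have := h (j + 1); simp only [upperRD] at *; omega

theorem interlaced_of_mem_between_false_true {ρ : Partn} (h : ρ ∈ between false true μ ν) :
    Interlaced μ ν := fun j => by
  have := h.1 j; have := h.2 j; have := h.1 (j + 1); have := h.2 (j + 1); omega

theorem interlaced_of_mem_between_true_false {ρ : Partn} (h : ρ ∈ between true false μ ν) :
    Interlaced μ ν := fun j => by
  have := h.1 j; have := h.2 j; have := h.1 (j + 1); have := h.2 (j + 1); omega

/-- The factor by which the interval lengths for `RD` and `DR` differ at part `j` is
`gapFactor (j + 1) / gapFactor j` (with `μ_{-1} = ∞`). -/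
def gapFactor : ℕ → ℕ
  | 0 => 2
  | j + 1 => if ν.parts (j + 1) < μ.parts j then 2 else 1

theorem mul_gapFactor_succ {μ ν : Partn} (h : Interlaced μ ν) (j : ℕ) :
    (upperRD μ ν j + 1 - lowerRD μ ν j) * gapFactor μ ν (j + 1) =
      (upperDR μ ν j + 1 - lowerDR μ ν j) * gapFactor μ ν j := by
  have := h j
  have := ν.antitone j (j + 1) (by omega)
  cases j with
  | zero =>
    simp only [upperRD, lowerRD, upperDR, lowerDR, gapFactor]
    split_ifs <;> omega
  | succ j =>
    have := h j
    have := μ.antitone j (j + 1) (by omega)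
    simp only [upperRD, lowerRD, upperDR, lowerDR, gapFactor]
    split_ifs <;> omega

theorem upperRD_succ_le (j : ℕ) : upperRD μ ν (j + 1) ≤ lowerRD μ ν j :=
  (min_le_right _ _).trans (le_max_left _ _)

theorem upperDR_succ_le (j : ℕ) : upperDR μ ν (j + 1) ≤ lowerDR μ ν j :=
  (min_le_right _ _).trans (le_max_right _ _)

variable {μ ν} {M : ℕ}

theorem lowerRD_upperRD_eq_zero (hM : ∀ j, M ≤ j → μ.parts j = 0 ∧ ν.parts j = 0)
    (j : ℕ) (hj : M + 1 ≤ j) :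
    lowerRD μ ν j = 0 ∧ upperRD μ ν j = 0 := by
  obtain ⟨j, rfl⟩ : ∃ i, j = i + 1 := ⟨j - 1, by omega⟩
  have := hM j (by omega); have := hM (j + 1) (by omega)
  simp only [lowerRD, upperRD]
  omega

theorem lowerDR_upperDR_eq_zero (hM : ∀ j, M ≤ j → μ.parts j = 0 ∧ ν.parts j = 0)
    (j : ℕ) (hj : M + 1 ≤ j) :
    lowerDR μ ν j = 0 ∧ upperDR μ ν j = 0 := by
  have := hM j (by omega); have := hM (j + 1) (by omega)
  simp only [lowerDR, upperDR]
  omega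

end Local

theorem card_between_true_false (μ ν : Partn) :
    Nat.card (between true false μ ν) = 2 * Nat.card (between false true μ ν) := by
  by_cases hC : Interlaced μ ν
  · obtain ⟨M, hM⟩ := exists_parts_eq_zero μ ν
    rw [between_true_false_eq_box, between_false_true_eq_box,
      card_box (M + 1) (upperRD_succ_le μ ν) (lowerRD_upperRD_eq_zero hM),
      card_box (M + 1) (upperDR_succ_le μ ν) (lowerDR_upperDR_eq_zero hM)]
    have h := Finset.prod_range_mul_telescope (mul_gapFactor_succ hC) (M + 1)
    have hT : gapFactor μ ν (M + 1) = 1 := by simp [gapFactor, (hM M le_rfl).1]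
    rw [hT, mul_one] at h
    rw [h, gapFactor, mul_comm]
  · have hRD : between true false μ ν = ∅ := Set.eq_empty_of_forall_notMem fun _ hρ =>
      hC (interlaced_of_mem_between_true_false μ ν hρ)
    have hDR : between false true μ ν = ∅ := Set.eq_empty_of_forall_notMem fun _ hρ =>
      hC (interlaced_of_mem_between_false_true μ ν hρ)
    simp [hRD, hDR]

theorem nonempty_equiv_between (μ ν : Partn) :
    Nonempty (between true false μ ν ≃ between false true μ ν × Bool) := by
  obtain ⟨M, hM⟩ := exists_parts_eq_zero μ ν
  have : Finite (between true false μ ν) := by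
    rw [between_true_false_eq_box]
    exact finite_box (M + 1) (upperRD_succ_le μ ν) (lowerRD_upperRD_eq_zero hM)
  have : Finite (between false true μ ν) := by
    rw [between_false_true_eq_box]
    exact finite_box (M + 1) (upperDR_succ_le μ ν) (lowerDR_upperDR_eq_zero hM)
  exact Finite.card_eq.1 (by rw [Nat.card_prod, card_between_true_false, mul_comm]; simp)

end Partn

open Partn Function

def stripSequences (k : ℕ) (w : ℕ → Bool) : Set (ℕ → Partn) :=
  {f | (∀ i, k < i → f i = Partn.empty) ∧ f 0 = Partn.empty ∧ f k = Partn.empty ∧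
    ∀ i, 1 ≤ i → i ≤ k → Step (w i) (f (i - 1)) (f i)}

def frame (k i : ℕ) (w : ℕ → Bool) : Set (ℕ → Partn) :=
  {f | (∀ j, k < j → f j = Partn.empty) ∧ f 0 = Partn.empty ∧ f k = Partn.empty ∧
    f i = Partn.empty ∧ ∀ j, 1 ≤ j → j ≤ k → j ≠ i → j ≠ i + 1 → Step (w j) (f (j - 1)) (f j)}

section Frame

variable {k i : ℕ} {w v : ℕ → Bool}

theorem update_mem_frame (hi : 1 ≤ i) (hik : i + 1 ≤ k)
    (hwv : ∀ j, j ≠ i → j ≠ i + 1 → w j = v j) {f : ℕ → Partn} (hf : f ∈ stripSequences k w) :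
    update f i Partn.empty ∈ frame k i v := by
  obtain ⟨hbig, h0, hk, hstep⟩ := hf
  refine ⟨fun j hj => ?_, ?_, ?_, update_self .., fun j hj1 hjk hji hji1 => ?_⟩
  · rw [update_of_ne (by omega)]; exact hbig j hj
  · rw [update_of_ne (by omega)]; exact h0
  · rw [update_of_ne (by omega)]; exact hk
  · rw [update_of_ne hji, update_of_ne (by omega), ← hwv j hji hji1]
    exact hstep j hj1 hjk

theorem update_mem_stripSequences (hi : 1 ≤ i) (hik : i + 1 ≤ k)
    (hwv : ∀ j, j ≠ i → j ≠ i + 1 → w j = v j) {g : ℕ → Partn} (hg : g ∈ frame k i v)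
    {ρ : Partn} (hρ : ρ ∈ between (w i) (w (i + 1)) (g (i - 1)) (g (i + 1))) :
    update g i ρ ∈ stripSequences k w := by
  obtain ⟨hbig, h0, hk, -, hstep⟩ := hg
  refine ⟨fun j hj => ?_, ?_, ?_, fun j hj1 hjk => ?_⟩
  · rw [update_of_ne (by omega)]; exact hbig j hj
  · rw [update_of_ne (by omega)]; exact h0
  · rw [update_of_ne (by omega)]; exact hk
  · by_cases hji : j = i
    · subst hji
      rw [update_self, update_of_ne (by omega)]
      exact hρ.1
    by_cases hji1 : j = i + 1
    · subst hji1
      rw [Nat.add_sub_cancel, update_self, update_of_ne (by omega)]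
      exact hρ.2
    rw [update_of_ne hji, update_of_ne (by omega), hwv j hji hji1]
    exact hstep j hj1 hjk hji hji1

def stripSequencesEquivSigma (hi : 1 ≤ i) (hik : i + 1 ≤ k)
    (hwv : ∀ j, j ≠ i → j ≠ i + 1 → w j = v j) :
    stripSequences k w ≃
      Σ g : frame k i v, between (w i) (w (i + 1)) (g.1 (i - 1)) (g.1 (i + 1)) where
  toFun f := ⟨⟨update f.1 i Partn.empty, update_mem_frame hi hik hwv f.2⟩, ⟨f.1 i, by
    simp only [update_of_ne (show i - 1 ≠ i by omega), update_of_ne (show i + 1 ≠ i by omega)]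
    have := f.2.2.2.2
    exact ⟨this i hi (by omega), this (i + 1) (by omega) hik⟩⟩⟩
  invFun g := ⟨update g.1.1 i g.2.1, update_mem_stripSequences hi hik hwv g.1.2 g.2.2⟩
  left_inv f := Subtype.ext (by simp)
  right_inv g := Sigma.subtype_ext (Subtype.ext (by simp [← g.1.2.2.2.2.1])) (by simp)

end Frame

theorem card_stripSequences_comp_swap {k i : ℕ} {w : ℕ → Bool} (hi : 1 ≤ i) (hik : i + 1 ≤ k)
    (hR : w i = true) (hD : w (i + 1) = false) :
    Nat.card (stripSequences k w) =
      2 * Nat.card (stripSequences k (w ∘ Equiv.swap i (i + 1))) := by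
  set v := w ∘ Equiv.swap i (i + 1)
  have hwv : ∀ j, j ≠ i → j ≠ i + 1 → w j = v j := fun j h₁ h₂ => by
    simp [v, Equiv.swap_apply_of_ne_of_ne h₁ h₂]
  have hvi : v i = false := by simp [v, hD]
  have hvi1 : v (i + 1) = true := by simp [v, hR]
  have e : (Σ g : frame k i v, between true false (g.1 (i - 1)) (g.1 (i + 1))) ≃
      (Σ g : frame k i v, between false true (g.1 (i - 1)) (g.1 (i + 1))) × Bool :=
    (Equiv.sigmaCongrRight fun _ => (nonempty_equiv_between _ _).some).trans
      (Equiv.sigmaProdDistrib _ _).symm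
  rw [Nat.card_congr (stripSequencesEquivSigma hi hik hwv),
    Nat.card_congr (stripSequencesEquivSigma (v := v) hi hik fun _ _ _ => rfl),
    hR, hD, hvi, hvi1, Nat.card_congr e, Nat.card_prod, mul_comm]
  simp

def ferrersShape (k : ℕ) (w : ℕ → Bool) : Finset (ℕ × ℕ) :=
  (Icc 1 k ×ˢ Icc 1 k).filter fun p => p.1 < p.2 ∧ w p.1 = true ∧ w p.2 = false

section FerrersShape

variable {k : ℕ} {w : ℕ → Bool}

theorem mem_ferrersShape {p : ℕ × ℕ} : p ∈ ferrersShape k w ↔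
    1 ≤ p.1 ∧ p.1 < p.2 ∧ p.2 ≤ k ∧ w p.1 = true ∧ w p.2 = false := by
  simp only [ferrersShape, mem_filter, mem_product, mem_Icc]
  exact ⟨fun ⟨⟨⟨h₁, _⟩, _, h₂⟩, h₃, h₄, h₅⟩ => ⟨h₁, h₃, h₂, h₄, h₅⟩,
    fun ⟨h₁, h₃, h₂, h₄, h₅⟩ => ⟨⟨⟨h₁, by omega⟩, by omega, h₂⟩, h₃, h₄, h₅⟩⟩

theorem ncard_setOf_subset_ferrersShape :
    {S : Finset (ℕ × ℕ) | ∀ p ∈ S,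
      1 ≤ p.1 ∧ p.1 < p.2 ∧ p.2 ≤ k ∧ w p.1 = true ∧ w p.2 = false}.ncard =
      2 ^ (ferrersShape k w).card := by
  have : {S : Finset (ℕ × ℕ) | ∀ p ∈ S,
      1 ≤ p.1 ∧ p.1 < p.2 ∧ p.2 ≤ k ∧ w p.1 = true ∧ w p.2 = false} =
      ↑(ferrersShape k w).powerset := by
    ext S
    simp [subset_iff, mem_ferrersShape]
  rw [this, Set.ncard_coe_finset, card_powerset]

theorem exists_succ_mem_ferrersShape {s t : ℕ} (h : (s, t) ∈ ferrersShape k w) :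
    ∃ i, (i, i + 1) ∈ ferrersShape k w := by
  induction t with
  | zero => simp [mem_ferrersShape] at h
  | succ t ih =>
    obtain ⟨hs, hst, htk, hR, hD⟩ := mem_ferrersShape.1 h
    cases hwt : w t
    · have hst' : s < t := lt_of_le_of_ne (by omega) fun h => by simp [h, hwt] at hR
      exact ih (mem_ferrersShape.2 ⟨hs, hst', by omega, hR, hwt⟩)
    · exact ⟨t, mem_ferrersShape.2 ⟨by omega, by omega, htk, hwt, hD⟩⟩

theorem map_swap_mem_ferrersShape_comp_swap {i : ℕ} (hi : 1 ≤ i) (hik : i + 1 ≤ k)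
    {p : ℕ × ℕ} (hp : p ∈ ferrersShape k w) (hne : p ≠ (i, i + 1)) :
    Prod.map (Equiv.swap i (i + 1)) (Equiv.swap i (i + 1)) p ∈
      ferrersShape k (w ∘ Equiv.swap i (i + 1)) := by
  obtain ⟨h₁, h₂, h₃, h₄, h₅⟩ := mem_ferrersShape.1 hp
  have hne' : ¬(p.1 = i ∧ p.2 = i + 1) := fun h => hne (Prod.ext h.1 h.2)
  refine mem_ferrersShape.2 ⟨?_, ?_, ?_, by simpa using h₄, by simpa using h₅⟩ <;>
    simp only [Prod.map_fst, Prod.map_snd, Equiv.swap_apply_def] <;> split_ifs <;> omega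

theorem card_ferrersShape_comp_swap {i : ℕ} (hi : 1 ≤ i) (hik : i + 1 ≤ k)
    (hR : w i = true) (hD : w (i + 1) = false) :
    (ferrersShape k w).card = (ferrersShape k (w ∘ Equiv.swap i (i + 1))).card + 1 := by
  set σ := Equiv.swap i (i + 1)
  have hmem : (i, i + 1) ∈ ferrersShape k w := mem_ferrersShape.2 ⟨hi, by omega, hik, hR, hD⟩
  have hσσ : w ∘ σ ∘ σ = w := by ext; simp [σ]
  rw [← card_erase_add_one hmem]
  congr 1
  refine card_nbij' (Prod.map σ σ) (Prod.map σ σ) (fun p hp => ?_) (fun p hp => ?_)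
    (fun p _ => Prod.ext (Equiv.swap_apply_self ..) (Equiv.swap_apply_self ..))
    (fun p _ => Prod.ext (Equiv.swap_apply_self ..) (Equiv.swap_apply_self ..))
  · obtain ⟨hne, hp⟩ := mem_erase.1 hp
    exact map_swap_mem_ferrersShape_comp_swap hi hik hp hne
  · have hp := mem_ferrersShape.1 (Finset.mem_coe.1 hp)
    have hne : p ≠ (i, i + 1) := by rintro rfl; simp [σ, hD] at hp
    refine mem_erase.2 ⟨fun h => ?_, ?_⟩
    · simp only [Prod.map, Prod.mk.injEq, Equiv.swap_apply_eq_iff, σ] at h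
      simp [h.1, h.2] at hp
    · have := map_swap_mem_ferrersShape_comp_swap hi hik (mem_ferrersShape.2 hp) hne
      rwa [Function.comp_assoc, hσσ] at this

end FerrersShape

section EmptyShape

variable {k : ℕ} {w : ℕ → Bool} {f : ℕ → Partn}

theorem apply_eq_empty_of_forall_false (hf : f ∈ stripSequences k w) (n : ℕ) (hnk : n ≤ k)
    (hD : ∀ j, 1 ≤ j → j ≤ n → w j = false) : f n = Partn.empty := by
  induction n with
  | zero => exact hf.2.1
  | succ n ih =>
    have hstep := hf.2.2.2 (n + 1) (by omega) hnk
    rw [hD (n + 1) (by omega) le_rfl, Nat.add_sub_cancel,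
      ih (by omega) fun j hj₁ hj₂ => hD j hj₁ (by omega)] at hstep
    exact eq_empty_of_vStripDel_empty hstep

theorem apply_eq_empty_of_forall_true (hf : f ∈ stripSequences k w) (n : ℕ) (hnk : n ≤ k)
    (hR : ∀ j, n < j → j ≤ k → w j = true) : f n = Partn.empty := by
  obtain ⟨m, hm⟩ := Nat.exists_eq_add_of_le hnk
  induction m generalizing n with
  | zero => rw [hm] at hf; exact hf.2.2.1
  | succ m ih =>
    have hstep := hf.2.2.2 (n + 1) (by omega) (by omega)
    rw [hR (n + 1) (by omega) (by omega), Nat.add_sub_cancel,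
      ih (n + 1) (by omega) (fun j hj₁ hj₂ => hR j (by omega) hj₂) (by omega)] at hstep
    exact eq_empty_of_hStrip_empty hstep

theorem stripSequences_eq_singleton (h : ferrersShape k w = ∅) :
    stripSequences k w = {fun _ => Partn.empty} := by
  ext f
  refine ⟨fun hf => funext fun n => ?_, fun hf => ?_⟩
  · by_cases hnk : n ≤ k
    swap
    · exact hf.1 n (by omega)
    by_cases hR : ∃ s, 1 ≤ s ∧ s ≤ n ∧ w s = true
    · obtain ⟨s, hs₁, hs₂, hs⟩ := hR
      refine apply_eq_empty_of_forall_true hf n hnk fun t ht₁ ht₂ => ?_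
      by_contra ht
      have : (s, t) ∈ ferrersShape k w :=
        mem_ferrersShape.2 ⟨hs₁, by omega, ht₂, hs, by simpa using ht⟩
      simp [h] at this
    · push Not at hR
      exact apply_eq_empty_of_forall_false hf n hnk fun j hj₁ hj₂ => by simpa using hR j hj₁ hj₂
  · rw [Set.mem_singleton_iff.1 hf]
    exact ⟨fun _ _ => rfl, rfl, rfl, fun _ _ _ => step_empty_empty _⟩

end EmptyShape

theorem card_stripSequences (k : ℕ) (w : ℕ → Bool) :
    Nat.card (stripSequences k w) = 2 ^ (ferrersShape k w).card := by
  induction h : (ferrersShape k w).card generalizing w with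
  | zero => simp [stripSequences_eq_singleton (card_eq_zero.1 h)]
  | succ n ih =>
    obtain ⟨p, hp⟩ := card_pos.1 (by omega : 0 < (ferrersShape k w).card)
    obtain ⟨i, hi⟩ := exists_succ_mem_ferrersShape hp
    obtain ⟨hi₁, -, hik, hR, hD⟩ := mem_ferrersShape.1 hi
    have := card_ferrersShape_comp_swap hi₁ hik hR hD
    rw [card_stripSequences_comp_swap hi₁ hik hR hD, ih _ (by omega), pow_succ, mul_comm]

/-- Theorem 2.1 (Krattenthaler): let `w = w_1 … w_k` be a word over `{R, D}` (here
`w i = true` means `R`, `w i = false` means `D`).  The 01-fillings of the associated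
Ferrers shape — arbitrary sets of cells `(s, t)` with `1 ≤ s < t ≤ k`, `w s = R`,
`w t = D` — are equinumerous with sequences `(λ^0, λ^1, …, λ^k)` of partitions with
`λ^0 = λ^k = ∅` such that `λ^i` is obtained from `λ^{i-1}` by adding a (possibly empty)
horizontal strip when `w i = R`, and by deleting a (possibly empty) vertical strip when
`w i = D`. -/
theorem stmt18 (k : ℕ) (w : ℕ → Bool) :
    {S : Finset (ℕ × ℕ) | ∀ p ∈ S,
      1 ≤ p.1 ∧ p.1 < p.2 ∧ p.2 ≤ k ∧ w p.1 = true ∧ w p.2 = false}.ncard =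
    {f : ℕ → Partn | (∀ i, k < i → f i = Partn.empty) ∧
      f 0 = Partn.empty ∧ f k = Partn.empty ∧
      (∀ i, 1 ≤ i → i ≤ k →
        if w i then HStrip (f (i - 1)) (f i) else VStripDel (f (i - 1)) (f i))}.ncard := by
  rw [ncard_setOf_subset_ferrersShape, ← Nat.card_coe_set_eq]
  exact (card_stripSequences k w).symm
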